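/- arXiv:2502.20151 — 3 statements merged into one kernel-verified Lean document; each statement's English description precedes it below -/
import Mathlib

section
/- The edge set of every 2k-regular finite multigraph (without semi-edges) can be partitioned into k spanning subgraphs each of which is 2-regular (i.e., k 2-factors). -/
/-!
Orient the edges so that every vertex has in-degree and out-degree `k`: this is a Hall-type
assignment of each edge to one of `deg v / 2` tail slots at one of its ends. The edges then form
a `k`-regular bipartite multigraph between the tails and the heads, which by Hall's theorem splits
into `k` perfect matchings. A perfect matching gives every vertex exactly one outgoing and one
incoming edge, i.e. degree `2` in the original multigraph.
-/

/-- The degree of a vertex in a multigraph given by an incidence map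
`ends : E → Sym2 V` (a loop counts twice). -/
def multigraphDegree {V E : Type} [DecidableEq V] [Fintype E]
    (ends : E → Sym2 V) (v : V) : ℕ :=
  ∑ e : E, (if ends e = Sym2.mk v v then 2 else if v ∈ ends e then 1 else 0)

open Finset

section Incidence

variable {V : Type*} [DecidableEq V]

def incidence (z : Sym2 V) (v : V) : ℕ :=
  if z = s(v, v) then 2 else if v ∈ z then 1 else 0

lemma incidence_mk (a b v : V) :
    incidence s(a, b) v = (if a = v then 1 else 0) + (if b = v then 1 else 0) := by
  by_cases ha : a = v <;> by_cases hb : b = v <;> subst_vars <;> simp [incidence, *, eq_comm]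

lemma sum_incidence_of_subset (z : Sym2 V) {N : Finset V} (hN : ∀ v ∈ z, v ∈ N) :
    ∑ v ∈ N, incidence z v = 2 := by
  induction z with
  | h a b => simp [incidence_mk, sum_add_distrib, hN a, hN b]

end Incidence

section Orientation

variable {V E : Type} [DecidableEq V] (ends : E → Sym2 V)

lemma sum_incidence_eq_card_add_card {T H : E → V} (hTH : ∀ e, ends e = s(T e, H e))
    (s : Finset E) (v : V) :
    ∑ e ∈ s, incidence (ends e) v = #{e ∈ s | T e = v} + #{e ∈ s | H e = v} := by
  simp only [hTH, incidence_mk, sum_add_distrib, card_filter]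

variable [Fintype E]

lemma multigraphDegree_eq_sum_incidence (v : V) :
    multigraphDegree ends v = ∑ e, incidence (ends e) v := rfl

variable [Fintype V]

lemma sum_multigraphDegree : ∑ v, multigraphDegree ends v = 2 * Fintype.card E := by
  simp only [multigraphDegree_eq_sum_incidence]
  rw [sum_comm, ← card_univ, card_eq_sum_ones, mul_sum]
  exact sum_congr rfl fun e _ => by rw [sum_incidence_of_subset _ fun v _ => mem_univ v]; rfl

/-- Hall's condition holds because the edges of `F` have all their ends among the vertices they
touch, so `2 * #F` is at most the total degree of those vertices. -/
lemma exists_injective_endpoint_slot (heven : ∀ v, Even (multigraphDegree ends v)) :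
    ∃ f : E → Σ v, Fin (multigraphDegree ends v / 2),
      Function.Injective f ∧ ∀ e, (f e).1 ∈ ends e := by
  refine (Fintype.all_card_le_filter_rel_iff_exists_injective
    (fun e (p : Σ v, Fin (multigraphDegree ends v / 2)) => p.1 ∈ ends e)).mp fun F => ?_
  set N : Finset V := {v | ∃ e ∈ F, v ∈ ends e}
  have hslots : #{p : Σ v, Fin (multigraphDegree ends v / 2) | ∃ e ∈ F, p.1 ∈ ends e}
      = ∑ v ∈ N, multigraphDegree ends v / 2 := by
    rw [card_filter, Fintype.sum_sigma, sum_filter]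
    simp [apply_ite card]
  have hdouble : 2 * #F ≤ ∑ v ∈ N, multigraphDegree ends v := calc
    2 * #F = ∑ e ∈ F, ∑ v ∈ N, incidence (ends e) v := by
      rw [card_eq_sum_ones, mul_sum]
      refine sum_congr rfl fun e he => (sum_incidence_of_subset _ fun v hv => ?_).symm
      simp only [N, mem_filter, mem_univ, true_and]; exact ⟨e, he, hv⟩
    _ = ∑ v ∈ N, ∑ e ∈ F, incidence (ends e) v := sum_comm
    _ ≤ ∑ v ∈ N, multigraphDegree ends v :=
      sum_le_sum fun v _ => sum_le_sum_of_subset (subset_univ F)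
  rw [hslots, ← Nat.sum_div fun v _ => (heven v).two_dvd]
  omega

theorem exists_balanced_orientation (heven : ∀ v, Even (multigraphDegree ends v)) :
    ∃ T H : E → V, (∀ e, ends e = s(T e, H e)) ∧ ∀ v, #{e | T e = v} = #{e | H e = v} := by
  obtain ⟨f, hf, hends⟩ := exists_injective_endpoint_slot ends heven
  refine ⟨fun e => (f e).1, fun e => Sym2.Mem.other (hends e),
    fun e => (Sym2.other_spec _).symm, fun v => ?_⟩
  have hle : ∀ u, #{e | (f e).1 = u} ≤ multigraphDegree ends u / 2 := fun u => by
    have hslots : #{p : Σ v, Fin (multigraphDegree ends v / 2) | p.1 = u}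
        = multigraphDegree ends u / 2 := by
      rw [card_filter, Fintype.sum_sigma]; simp [apply_ite card]
    rw [← hslots]
    exact card_le_card_of_injOn f (fun e he => by simpa using he) hf.injOn
  have htotal : ∑ v, #{e | (f e).1 = v} = ∑ v, multigraphDegree ends v / 2 := by
    rw [← card_eq_sum_card_fiberwise fun _ _ => mem_univ _, card_univ,
      ← Nat.sum_div fun v _ => (heven v).two_dvd, sum_multigraphDegree]
    omega
  have hhalf := (sum_eq_sum_iff_of_le fun v _ => hle v).mp htotal v (mem_univ v)
  have hdeg := sum_incidence_eq_card_add_card ends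
    (fun e => (Sym2.other_spec (hends e)).symm) univ v
  rw [← multigraphDegree_eq_sum_incidence] at hdeg
  have := Nat.two_mul_div_two_of_even (heven v)
  dsimp only at hdeg hhalf ⊢
  omega

end Orientation

section Bipartite

variable {A B E : Type*} [DecidableEq A] [DecidableEq B] (T : E → A) (H : E → B)

/-- `T` and `H` give the ends of the edges of a bipartite multigraph with sides `A` and `B`. -/
def IsPerfectMatching (S : Finset E) : Prop :=
  (∀ a, #{e ∈ S | T e = a} = 1) ∧ ∀ b, #{e ∈ S | H e = b} = 1

variable {T H}

lemma IsPerfectMatching.map_subtype {p : E → Prop} {S : Finset (Subtype p)}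
    (hS : IsPerfectMatching (fun e => T e.1) (fun e => H e.1) S) :
    IsPerfectMatching T H (S.map (Function.Embedding.subtype p)) :=
  ⟨fun a => by rw [filter_map, card_map]; exact hS.1 a,
    fun b => by rw [filter_map, card_map]; exact hS.2 b⟩

lemma card_filter_subtype_compl_add [Fintype E] [DecidableEq E] {X : Type*} [DecidableEq X]
    (S : Finset E) (f : E → X) (x : X) :
    #{e : {e // e ∉ S} | f e = x} + #{e ∈ S | f e = x} = #{e | f e = x} := by
  have h : ({e : {e // e ∉ S} | f e = x} : Finset _).map (.subtype _) =
      ({e | f e = x ∧ e ∉ S} : Finset E) := by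
    ext e; simp [and_comm]
  rw [← card_map, h, ← card_filter_add_card_filter_not (s := {e | f e = x}) (· ∈ S),
    filter_filter, filter_filter, add_comm]
  congr 2
  ext e; simp [and_comm]

variable [Fintype A] [Fintype B] [Fintype E]

lemma card_mul_eq_card_of_card_fiber_eq {X : Type*} [Fintype X] [DecidableEq X] (f : E → X)
    {k : ℕ} (hf : ∀ x, #{e | f e = x} = k) : Fintype.card X * k = Fintype.card E := by
  rw [← card_univ, ← card_univ, ← sum_const_nat fun x _ => hf x,
    sum_card_fiberwise_eq_card_filter, filter_true_of_mem fun _ _ => mem_univ _]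

/-- Hall's condition: the `k * #s` edges leaving `s` all enter the neighbourhood of `s`, which
receives exactly `k` edges per vertex. -/
theorem exists_isPerfectMatching_of_regular {k : ℕ} (hk : 0 < k)
    (hT : ∀ a, #{e | T e = a} = k) (hH : ∀ b, #{e | H e = b} = k) :
    ∃ S, IsPerfectMatching T H S := by
  obtain ⟨f, hf, hfe⟩ := (Fintype.all_card_le_filter_rel_iff_exists_injective
    (fun a b => ∃ e, T e = a ∧ H e = b)).mp fun s => by
    set N : Finset B := {b | ∃ a ∈ s, ∃ e, T e = a ∧ H e = b}
    have hsub : ({e | T e ∈ s} : Finset E) ⊆ ({e | H e ∈ N} : Finset E) := fun e he => by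
      simp only [mem_filter, mem_univ, true_and, N] at he ⊢
      exact ⟨T e, he, e, rfl, rfl⟩
    have := card_le_card hsub
    rw [← sum_card_fiberwise_eq_card_filter, ← sum_card_fiberwise_eq_card_filter,
      sum_const_nat fun a _ => hT a, sum_const_nat fun b _ => hH b] at this
    exact Nat.le_of_mul_le_mul_right this hk
  have hfbij : Function.Bijective f := (Fintype.bijective_iff_injective_and_card f).mpr
    ⟨hf, Nat.eq_of_mul_eq_mul_right hk <| (card_mul_eq_card_of_card_fiber_eq T hT).trans
      (card_mul_eq_card_of_card_fiber_eq H hH).symm⟩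
  choose M hMT hMH using hfe
  refine ⟨univ.map ⟨M, Function.LeftInverse.injective hMT⟩,
    fun a => card_eq_one.mpr ⟨M a, ?_⟩, fun b => ?_⟩
  · ext e
    simp only [mem_filter, mem_map, mem_univ, true_and, mem_singleton, Function.Embedding.coeFn_mk]
    constructor
    · rintro ⟨⟨a', rfl⟩, rfl⟩; rw [hMT]
    · rintro rfl; exact ⟨⟨a, rfl⟩, hMT a⟩
  · obtain ⟨a, rfl⟩ := hfbij.2 b
    refine card_eq_one.mpr ⟨M a, ?_⟩
    ext e
    simp only [mem_filter, mem_map, mem_univ, true_and, mem_singleton, Function.Embedding.coeFn_mk]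
    constructor
    · rintro ⟨⟨a', rfl⟩, h⟩; rw [hf ((hMH a').symm.trans h)]
    · rintro rfl; exact ⟨⟨a, rfl⟩, hMH a⟩

theorem exists_partition_isPerfectMatching_of_regular [DecidableEq E] {k : ℕ}
    (hT : ∀ a, #{e | T e = a} = k) (hH : ∀ b, #{e | H e = b} = k) :
    ∃ c : E → Fin k, ∀ i, IsPerfectMatching T H {e | c e = i} := by
  induction k generalizing E with
  | zero =>
    have : IsEmpty E := ⟨fun e => by
      have := hT (T e)
      rw [card_eq_zero, filter_eq_empty_iff] at this
      exact this (mem_univ e) rfl⟩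
    exact ⟨isEmptyElim, fun i => i.elim0⟩
  | succ k ih =>
    obtain ⟨S, hS⟩ := exists_isPerfectMatching_of_regular k.succ_pos hT hH
    obtain ⟨c, hc⟩ := ih (T := fun e : {e // e ∉ S} => T e) (H := fun e => H e)
      (fun a => by have := card_filter_subtype_compl_add S T a; rw [hT, hS.1] at this; omega)
      (fun b => by have := card_filter_subtype_compl_add S H b; rw [hH, hS.2] at this; omega)
    refine ⟨fun e => if h : e ∈ S then Fin.last k else (c ⟨e, h⟩).castSucc, Fin.lastCases ?_ ?_⟩
    · convert hS
      ext e
      by_cases h : e ∈ S <;> simp [h, Fin.castSucc_ne_last]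
    · intro i
      convert (hc i).map_subtype
      ext e
      by_cases h : e ∈ S <;> simp [h, (Fin.castSucc_ne_last _).symm]

end Bipartite

/-- Petersen's 2-factor theorem: the edge set of every `2k`-regular finite
multigraph can be partitioned into `k` spanning `2`-regular subgraphs. -/
theorem stmt_1 {V E : Type} [DecidableEq V] [Fintype V] [Fintype E]
    (k : ℕ) (ends : E → Sym2 V)
    (hreg : ∀ v : V, multigraphDegree ends v = 2 * k) :
    ∃ c : E → Fin k, ∀ i : Fin k, ∀ v : V,
      (∑ e : Finset.univ.filter (fun e : E => c e = i),
        (if ends e = Sym2.mk v v then 2 else if v ∈ ends (e : E) then 1 else 0)) = 2 := by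
  classical
  obtain ⟨T, H, hTH, hbal⟩ := exists_balanced_orientation ends fun v => hreg v ▸ even_two_mul k
  have hhalf : ∀ v, #{e | T e = v} = k ∧ #{e | H e = v} = k := fun v => by
    have := (sum_incidence_eq_card_add_card ends hTH univ v).symm.trans (hreg v)
    have := hbal v
    constructor <;> omega
  obtain ⟨c, hc⟩ := exists_partition_isPerfectMatching_of_regular
    (fun v => (hhalf v).1) (fun v => (hhalf v).2)
  refine ⟨c, fun i v => ?_⟩
  refine (sum_coe_sort {e | c e = i} fun e => incidence (ends e) v).trans ?_
  rw [sum_incidence_eq_card_add_card ends hTH, (hc i).1, (hc i).2]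
end

section
/- Let G be a finite (2c+1)-regular simple graph. Then G covers the one-vertex graph F(1,c) (one semi-edge and c loops) if and only if G has a perfect matching. More precisely: there exists a partition of the edge set of G into one perfect matching and c 2-factors if and only if G has a perfect matching. -/
/-!
Deleting a perfect matching from `G` leaves a `2c`-regular graph, and a `2k`-regular graph splits
into `k` 2-factors (Petersen). A graph with all degrees even has a balanced orientation: a longest
trail among the edges not yet oriented is closed, since its end would otherwise have odd degree
there, and orienting a closed trail along its darts keeps every in-degree equal to the out-degree.
In a `2k`-regular graph all in- and out-degrees are then `k`, so Hall's theorem gives a bijection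
`f` with an arc `v → f v` for every `v`; as the orientation is asymmetric, `f (f v) ≠ v`, so
these arcs form a 2-factor. Conversely, colour `0` of such a colouring is a perfect matching.
-/

open Finset

lemma Finset.card_filter_mk_mem_left {α β : Type*} [Fintype β] [DecidableEq α] [DecidableEq β]
    (T : Finset (α × β)) (a : α) : #{b | (a, b) ∈ T} = #{x ∈ T | x.1 = a} :=
  card_nbij' (fun b => (a, b)) Prod.snd (fun b hb => by simpa using hb)
    (fun _ => by aesop) (fun b _ => rfl) (fun _ => by aesop)

lemma Finset.card_filter_mk_mem_right {α β : Type*} [Fintype α] [DecidableEq α] [DecidableEq β]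
    (T : Finset (α × β)) (b : β) : #{a | (a, b) ∈ T} = #{x ∈ T | x.2 = b} :=
  card_nbij' (fun a => (a, b)) Prod.fst (fun a ha => by simpa using ha)
    (fun _ => by aesop) (fun a _ => rfl) (fun _ => by aesop)

theorem Fintype.exists_injective_of_le_card_filter_of_card_filter_le {α β : Type*} [Fintype α]
    [Fintype β] (r : α → β → Prop) [DecidableRel r] {k : ℕ} (hk : 0 < k)
    (hα : ∀ a, k ≤ #{b | r a b}) (hβ : ∀ b, #{a | r a b} ≤ k) :
    ∃ f : α → β, Function.Injective f ∧ ∀ a, r a (f a) := by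
  refine (Fintype.all_card_le_filter_rel_iff_exists_injective r).mp fun A => ?_
  refine Nat.le_of_mul_le_mul_right (card_mul_le_card_mul r (fun a ha => ?_) fun b _ => ?_) hk
  · refine (hα a).trans (card_le_card fun b hb => ?_)
    simp only [mem_filter_univ] at hb
    exact mem_filter.mpr ⟨mem_filter_univ _ |>.mpr ⟨a, ha, hb⟩, hb⟩
  · exact (card_le_card (filter_subset_filter _ (subset_univ A))).trans (hβ b)

namespace SimpleGraph

variable {V : Type*} {G : SimpleGraph V}

lemma degree_sdiff_of_le {H : SimpleGraph V} [DecidableEq V] (h : H ≤ G) (v : V)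
    [Fintype (G.neighborSet v)] [Fintype (H.neighborSet v)] [Fintype ((G \ H).neighborSet v)] :
    (G \ H).degree v = G.degree v - H.degree v := by
  simp only [← card_neighborFinset_eq_degree, neighborFinset_sdiff]
  exact card_sdiff_of_subset (by simpa [← coe_subset] using neighborSet_mono h v)

lemma Walk.IsTrail.countP_edges_eq_degree [Fintype V] [DecidableEq V] [DecidableRel G.Adj]
    {u w v : V} {p : G.Walk u w} (hp : p.IsTrail) (h : ∀ x, G.Adj v x → s(v, x) ∈ p.edges) :
    p.edges.countP (v ∈ ·) = G.degree v := by
  rw [← hp.edges_nodup.card_eq_countP, ← card_incidenceFinset_eq_degree]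
  congr 1
  ext e
  simp only [mem_filter, List.mem_toFinset, mem_incidenceFinset, incidenceSet,
    Set.mem_ofPred_eq]
  refine ⟨fun ⟨he, hv⟩ => ⟨p.edges_subset_edgeSet he, hv⟩,
    fun ⟨he, hv⟩ => ⟨?_, hv⟩⟩
  obtain ⟨x, rfl⟩ := Sym2.mem_iff_exists.mp hv
  exact h x he

theorem exists_isCircuit_of_forall_even_degree [Fintype V] [DecidableEq V] [DecidableRel G.Adj]
    (heven : ∀ v, Even (G.degree v)) {a b : V} (hab : G.Adj a b) :
    ∃ (u : V) (p : G.Walk u u), p.IsCircuit := by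
  have : Nonempty V := ⟨a⟩
  obtain ⟨u, v, p, hp, hmax⟩ := Walk.exists_isTrail_forall_isTrail_length_le_length G
  have hpos : 1 ≤ p.length := by simpa using hmax a b (.cons hab .nil) (by simp)
  have hsat : ∀ x, G.Adj v x → s(v, x) ∈ p.edges := by
    intro x hvx
    by_contra hx
    have hext : (p.reverse.cons hvx.symm).IsTrail := by
      simpa [Walk.isTrail_cons, Walk.edges_reverse, Sym2.eq_swap, hx] using hp.reverse
    simpa using hmax _ _ _ hext
  have huv : u = v := by
    by_contra huv
    have := (hp.even_countP_edges_iff v).mp (hp.countP_edges_eq_degree hsat ▸ heven v) huv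
    exact this.2 rfl
  subst huv
  exact ⟨u, p, hp, fun h => by simp [h] at hpos⟩

/-- A finset of ordered pairs is read as a set of arcs; this is the underlying simple graph. -/
def fromArcs (T : Finset (V × V)) : SimpleGraph V := fromRel fun v w => (v, w) ∈ T

instance [DecidableEq V] (T : Finset (V × V)) : DecidableRel (fromArcs T).Adj :=
  inferInstanceAs (DecidableRel (fromRel fun v w => (v, w) ∈ T).Adj)

@[simp]
lemma fromArcs_adj {T : Finset (V × V)} {v w : V} :
    (fromArcs T).Adj v w ↔ v ≠ w ∧ ((v, w) ∈ T ∨ (w, v) ∈ T) :=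
  fromRel_adj ..

lemma Walk.countP_darts_fst_eq_countP_darts_snd [DecidableEq V] {u : V} (p : G.Walk u u)
    (v : V) : p.darts.countP (·.fst = v) = p.darts.countP (·.snd = v) := by
  have h := congrArg (List.countP (· = v))
    ((p.dropLast_support_concat).trans p.cons_tail_support.symm)
  simp only [← p.map_fst_darts, ← p.map_snd_darts, List.countP_append, List.countP_cons,
    List.countP_map, List.countP_nil, Function.comp_def] at h
  omega

structure IsBalancedSuborientation [Fintype V] [DecidableEq V] (G : SimpleGraph V)
    (T : Finset (V × V)) : Prop where
  adj : ∀ ⦃v w⦄, (v, w) ∈ T → G.Adj v w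
  asymm : ∀ ⦃v w⦄, (v, w) ∈ T → (w, v) ∉ T
  card_out_eq_card_in : ∀ v, #{w | (v, w) ∈ T} = #{w | (w, v) ∈ T}

namespace IsBalancedSuborientation

variable [Fintype V] [DecidableEq V] {T T' : Finset (V × V)}

lemma fromArcs_le (hT : G.IsBalancedSuborientation T) : fromArcs T ≤ G := by
  rintro v w ⟨-, h | h⟩
  exacts [hT.adj h, (hT.adj h).symm]

lemma degree_fromArcs (hT : G.IsBalancedSuborientation T) (v : V) :
    (fromArcs T).degree v = 2 * #{w | (v, w) ∈ T} := by
  rw [← card_neighborFinset_eq_degree, two_mul]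
  nth_rw 2 [hT.card_out_eq_card_in]
  rw [← card_union_of_disjoint]
  · congr 1
    ext w
    simp only [mem_neighborFinset, fromArcs_adj, mem_union, mem_filter_univ]
    exact ⟨And.right, fun h => ⟨h.elim (hT.adj · |>.ne) (hT.adj · |>.ne'), h⟩⟩
  · exact disjoint_filter.mpr fun w _ h h' => hT.asymm h h'

lemma notMem_of_sdiff_fromArcs (hT' : (G \ fromArcs T).IsBalancedSuborientation T') {v w : V}
    (h : (v, w) ∈ T') : (v, w) ∉ T ∧ (w, v) ∉ T := by
  have := hT'.adj h
  simp only [sdiff_adj, fromArcs_adj, not_and, not_or] at this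
  exact this.2 this.1.ne

lemma union (hT : G.IsBalancedSuborientation T)
    (hT' : (G \ fromArcs T).IsBalancedSuborientation T') :
    G.IsBalancedSuborientation (T ∪ T') where
  adj v w h := (mem_union.mp h).elim (hT.adj ·) (hT'.adj · |>.1)
  asymm v w h h' := by
    rcases mem_union.mp h with h | h <;> rcases mem_union.mp h' with h' | h'
    exacts [hT.asymm h h', (notMem_of_sdiff_fromArcs hT' h').2 h,
      (notMem_of_sdiff_fromArcs hT' h).2 h', hT'.asymm h h']
  card_out_eq_card_in v := by
    simp only [mem_union, filter_or]
    rw [card_union_of_disjoint, card_union_of_disjoint, hT.card_out_eq_card_in,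
      hT'.card_out_eq_card_in]
    all_goals exact disjoint_filter.mpr fun w _ h h' => (notMem_of_sdiff_fromArcs hT' h').1 h

end IsBalancedSuborientation

lemma Walk.IsTrail.isBalancedSuborientation [Fintype V] [DecidableEq V] {u : V}
    {p : G.Walk u u} (hp : p.IsTrail) :
    G.IsBalancedSuborientation (p.darts.map Dart.toProd).toFinset where
  adj v w h := by
    obtain ⟨⟨_, hd⟩, -, rfl⟩ := List.mem_map.mp (List.mem_toFinset.mp h)
    exact hd
  asymm v w h h' := by
    obtain ⟨d, hd, hvw⟩ := List.mem_map.mp (List.mem_toFinset.mp h)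
    obtain ⟨d', hd', hwv⟩ := List.mem_map.mp (List.mem_toFinset.mp h')
    have hdd' : d' = d := List.inj_on_of_nodup_map hp.edges_nodup hd' hd
      (by simp [Dart.edge, hvw, hwv, Sym2.eq_swap])
    have hne : d.toProd.1 ≠ d.toProd.2 := d.adj.ne
    rw [hdd', hvw] at hwv
    rw [hvw] at hne
    exact hne (congrArg Prod.fst hwv)
  card_out_eq_card_in v := by
    have hnd := (hp.edges_nodup.of_map _).map Dart.toProd_injective
    rw [card_filter_mk_mem_left, card_filter_mk_mem_right, hnd.card_eq_countP,
      hnd.card_eq_countP, List.countP_map, List.countP_map]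
    exact p.countP_darts_fst_eq_countP_darts_snd v

theorem exists_isBalancedSuborientation_fromArcs_eq [Fintype V] [DecidableEq V]
    [DecidableRel G.Adj] (heven : ∀ v, Even (G.degree v)) :
    ∃ T, G.IsBalancedSuborientation T ∧ fromArcs T = G := by
  classical
  obtain ⟨T, hT, hmax⟩ := exists_max_image {T | G.IsBalancedSuborientation T} card
    ⟨∅, (mem_filter_univ _).mpr ⟨by simp, by simp, by simp⟩⟩
  simp only [mem_filter_univ] at hT hmax
  refine ⟨T, hT, le_antisymm hT.fromArcs_le ?_⟩
  rw [← sdiff_eq_bot_iff]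
  by_contra hne
  obtain ⟨a, b, hab⟩ := ne_bot_iff_exists_adj.mp hne
  have heven' : ∀ v, Even ((G \ fromArcs T).degree v) := fun v => by
    rw [degree_sdiff_of_le hT.fromArcs_le, hT.degree_fromArcs]
    exact (heven v).tsub (even_two_mul _)
  obtain ⟨u, p, hp⟩ := exists_isCircuit_of_forall_even_degree heven' hab
  have hTp := hp.isTrail.isBalancedSuborientation
  obtain ⟨⟨v, w⟩, hvw⟩ : (p.darts.map Dart.toProd).toFinset.Nonempty := by
    simpa [← List.length_pos_iff, ← Walk.not_nil_iff_lt_length] using hp.not_nil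
  have hlt : #T < #(T ∪ (p.darts.map Dart.toProd).toFinset) :=
    card_lt_card (ssubset_iff.mpr ⟨(v, w), (hTp.notMem_of_sdiff_fromArcs hvw).1,
      insert_subset (mem_union_right _ hvw) subset_union_left⟩)
  exact hlt.not_ge (hmax _ (hT.union hTp))

theorem exists_fromArcs_le_isRegularOfDegree_two [Fintype V] [DecidableEq V]
    [DecidableRel G.Adj] {k : ℕ} (hk : 0 < k) (hG : G.IsRegularOfDegree (2 * k)) :
    ∃ T : Finset (V × V), fromArcs T ≤ G ∧ (fromArcs T).IsRegularOfDegree 2 := by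
  obtain ⟨T, hT, hTG⟩ :=
    exists_isBalancedSuborientation_fromArcs_eq fun v => hG v ▸ even_two_mul k
  have hout (v : V) : #{w | (v, w) ∈ T} = k := by
    have h := hT.degree_fromArcs v
    -- the two degrees differ only in their `Fintype` instances
    have : (fromArcs T).degree v = G.degree v := by subst hTG; congr!
    rw [this, hG v] at h
    omega
  obtain ⟨f, hf, hfT⟩ := Fintype.exists_injective_of_le_card_filter_of_card_filter_le
    (fun v w => (v, w) ∈ T) hk (fun v => (hout v).ge)
    (fun v => (hT.card_out_eq_card_in v ▸ hout v).le)
  set F := T.filter fun x => f x.1 = x.2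
  have hmem (v w : V) : (v, w) ∈ F ↔ f v = w := by
    simpa [F] using fun h : f v = w => h ▸ hfT v
  have hout' (v : V) : #{w | (v, w) ∈ F} = 1 := by
    simpa only [hmem, ← Fintype.existsUnique_iff_card_one] using existsUnique_eq'
  have hin' (v : V) : #{w | (w, v) ∈ F} = 1 := by
    simpa only [hmem, ← Fintype.existsUnique_iff_card_one] using
      hf.bijective_of_finite.existsUnique v
  have hF : G.IsBalancedSuborientation F :=
    ⟨fun v w h => hT.adj (mem_filter.mp h).1,
      fun v w h h' => hT.asymm (mem_filter.mp h).1 (mem_filter.mp h').1,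
      fun v => (hout' v).trans (hin' v).symm⟩
  exact ⟨F, hF.fromArcs_le, fun v => by rw [hF.degree_fromArcs, hout']⟩

section Coloring

variable {ι κ : Type*}

def colorClass (G : SimpleGraph V) (col : Sym2 V → ι) (i : ι) : SimpleGraph V where
  Adj v w := G.Adj v w ∧ col s(v, w) = i
  symm := ⟨fun v w h => ⟨h.1.symm, by rw [Sym2.eq_swap, h.2]⟩⟩
  loopless := ⟨fun v h => h.1.ne rfl⟩

instance [DecidableRel G.Adj] [DecidableEq ι] (col : Sym2 V → ι) (i : ι) :
    DecidableRel (G.colorClass col i).Adj :=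
  inferInstanceAs (DecidableRel fun v w => G.Adj v w ∧ col s(v, w) = i)

variable {col : Sym2 V → ι} {i : ι}

@[simp]
lemma colorClass_adj {v w : V} : (G.colorClass col i).Adj v w ↔ G.Adj v w ∧ col s(v, w) = i :=
  Iff.rfl

lemma mem_edgeSet_colorClass {e : Sym2 V} :
    e ∈ (G.colorClass col i).edgeSet ↔ e ∈ G.edgeSet ∧ col e = i := by
  induction e using Sym2.ind
  rfl

lemma degree_colorClass [Fintype V] [DecidableEq V] [DecidableRel G.Adj] [DecidableEq ι]
    (v : V) : (G.colorClass col i).degree v =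
      Nat.card {e : G.edgeSet // v ∈ (e : Sym2 V) ∧ col e = i} := by
  rw [← card_incidenceSet_eq_degree, ← Nat.card_eq_fintype_card]
  exact Nat.card_congr
    { toFun e := ⟨⟨e, (mem_edgeSet_colorClass.mp e.2.1).1⟩, e.2.2,
        (mem_edgeSet_colorClass.mp e.2.1).2⟩
      invFun e := ⟨e.1, mem_edgeSet_colorClass.mpr ⟨e.1.2, e.2.2⟩, e.2.1⟩ }

lemma existsUnique_incident_iff [Fintype V] [DecidableRel G.Adj] (v : V) :
    (∃! e : G.edgeSet, v ∈ (e : Sym2 V) ∧ col e = i) ↔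
      ∃! w, (G.colorClass col i).Adj v w := by
  classical
  rw [← degree_eq_one_iff_existsUnique_adj, degree_colorClass, Nat.card_eq_fintype_card,
    Fintype.card_subtype, Fintype.existsUnique_iff_card_one]

variable {F : SimpleGraph V} [DecidablePred (· ∈ F.edgeSet)] {f : ι → κ} {j : κ}

lemma colorClass_ite_apply (col : Sym2 V → ι) (hf : f.Injective) (hj : ∀ i, f i ≠ j)
    (i : ι) :
    G.colorClass (fun e => if e ∈ F.edgeSet then j else f (col e)) (f i) =
      (G \ F).colorClass col i := by
  ext v w
  by_cases h : F.Adj v w <;> simp [h, hf.eq_iff, (hj i).symm]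

lemma colorClass_ite_self (hF : F ≤ G) (col : Sym2 V → ι) (hj : ∀ i, f i ≠ j) :
    G.colorClass (fun e => if e ∈ F.edgeSet then j else f (col e)) j = F := by
  ext v w
  by_cases h : F.Adj v w
  · simp [h, hF h]
  · simp [h, hj]

end Coloring

theorem exists_coloring_of_isRegularOfDegree_sdiff [Fintype V] [DecidableEq V] :
    ∀ (k : ℕ) {G H : SimpleGraph V} [DecidableRel G.Adj] [DecidableRel H.Adj], H ≤ G →
      (G \ H).IsRegularOfDegree (2 * k) →
      ∃ col : Sym2 V → Fin (k + 1),
        G.colorClass col 0 = H ∧ ∀ i ≠ 0, (G.colorClass col i).IsRegularOfDegree 2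
  | 0, G, H, _, _, hHG, hreg => by
    have hGH : G = H := by
      refine le_antisymm (fun v w hvw => ?_) hHG
      by_contra hH
      have := ((G \ H).degree_pos_iff_exists_adj v).mpr ⟨w, hvw, hH⟩
      have := hreg v
      omega
    refine ⟨fun _ => 0, ?_, fun i hi => absurd (Fin.fin_one_eq_zero i) hi⟩
    ext v w
    simp [hGH]
  | k + 1, G, H, _, _, hHG, hreg => by
    obtain ⟨T, hTle, hTreg⟩ := exists_fromArcs_le_isRegularOfDegree_two k.succ_pos hreg
    have hFG : fromArcs T ≤ G := hTle.trans sdiff_le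
    have hHF : H ≤ G \ fromArcs T := fun v w h => ⟨hHG h, fun h' => (hTle h').2 h⟩
    have hreg' : ((G \ fromArcs T) \ H).IsRegularOfDegree (2 * k) := fun v => by
      have h₁ := degree_sdiff_of_le hHG v
      rw [degree_sdiff_of_le hHF, degree_sdiff_of_le hFG, hTreg v]
      rw [hreg v] at h₁
      omega
    obtain ⟨col, hcol0, hcol⟩ := exists_coloring_of_isRegularOfDegree_sdiff k hHF hreg'
    have hne := @Fin.castSucc_ne_last (k + 1)
    refine ⟨fun e => if e ∈ (fromArcs T).edgeSet then Fin.last (k + 1) else (col e).castSucc,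
      ?_, fun i hi => ?_⟩
    · rw [← hcol0, ← colorClass_ite_apply col (Fin.castSucc_injective _) hne]
      rfl
    · induction i using Fin.lastCases with
      | last => convert hTreg using 1; exact colorClass_ite_self hFG col hne
      | cast j =>
        convert hcol j (by rintro rfl; exact hi rfl) using 1
        exact colorClass_ite_apply col (Fin.castSucc_injective _) hne j

end SimpleGraph

open SimpleGraph

/-- A finite `(2c+1)`-regular simple graph covers `F(1,c)` (one semi-edge and `c`
loops) iff it has a perfect matching: the edge set of `G` can be partitioned into
one perfect matching (colour `0`) and `c` 2-factors (the other colours) if and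
only if `G` has a perfect matching. -/
theorem stmt_4 {V : Type} [Fintype V] (c : ℕ) (G : SimpleGraph V)
    [DecidableRel G.Adj] (hreg : ∀ v : V, G.degree v = 2 * c + 1) :
    (∃ col : Sym2 V → Fin (c + 1),
        (∀ v : V, ∃! e : G.edgeSet, v ∈ (e : Sym2 V) ∧ col e = 0) ∧
        (∀ i : Fin (c + 1), i ≠ 0 → ∀ v : V,
          Nat.card {e : G.edgeSet // v ∈ (e : Sym2 V) ∧ col e = i} = 2)) ↔
      ∃ M : G.Subgraph, M.IsPerfectMatching := by
  classical
  simp_rw [existsUnique_incident_iff]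
  constructor
  · rintro ⟨col, h0, -⟩
    exact ⟨G.toSubgraph (G.colorClass col 0) fun _ _ h => h.1,
      Subgraph.isPerfectMatching_iff.mpr h0⟩
  · rintro ⟨M, hM⟩
    have hM₁ := Subgraph.isPerfectMatching_iff.mp hM
    have hreg' : (G \ M.spanningCoe).IsRegularOfDegree (2 * c) := fun v => by
      rw [degree_sdiff_of_le M.spanningCoe_le, hreg v,
        degree_eq_one_iff_existsUnique_adj.mpr (hM₁ v)]
      omega
    obtain ⟨col, h0, hcol⟩ :=
      exists_coloring_of_isRegularOfDegree_sdiff c M.spanningCoe_le hreg'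
    refine ⟨col, fun v => h0 ▸ hM₁ v, fun i hi v => ?_⟩
    rw [← degree_colorClass]
    exact hcol i hi v
end

section
/- Let LT be the graph obtained from the complete bipartite graph K_{2,3} with parts {p₁,p₂} and {m₁,m₂,m₃} by adding two new vertices u, v with u adjacent only to p₁ and v adjacent only to p₂ (the 'limping tripod'). Suppose f: V(LT) → {p, r, g} is a map with f(p₁)=f(p₂)=p, f maps {u,v,m₁,m₂,m₃} into {r,g}, and each of p₁, p₂ has exactly two neighbours mapped to r and exactly two mapped to g. Then f(u) = f(v). -/
/-- Vertices of the limping tripod `LT`. -/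
inductive LTV : Type
  | p1 | p2 | u | v | m1 | m2 | m3
  deriving DecidableEq

instance : Fintype LTV where
  elems := {LTV.p1, LTV.p2, LTV.u, LTV.v, LTV.m1, LTV.m2, LTV.m3}
  complete := by intro x; cases x <;> first | decide | simp

/-- The target vertices: `p` (degree 4) and the pair `r`, `g`. -/
inductive Tgt : Type
  | p | r | g
  deriving DecidableEq

open LTV Tgt

/-- Adjacency of the limping tripod: `K_{2,3}` on parts `{p1,p2}`, `{m1,m2,m3}`,
plus pendant vertices `u` adjacent to `p1` and `v` adjacent to `p2`. -/
def LTAdj (x y : LTV) : Prop :=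
  (x, y) ∈ [(p1, m1), (p1, m2), (p1, m3), (p2, m1), (p2, m2), (p2, m3),
            (u, p1), (v, p2)] ∨
  (y, x) ∈ [(p1, m1), (p1, m2), (p1, m3), (p2, m1), (p2, m2), (p2, m3),
            (u, p1), (v, p2)]

instance : DecidableRel LTAdj := fun x y => by unfold LTAdj; infer_instance

open Finset

theorem Finset.card_filter_insert_of_notMem {α : Type*} [DecidableEq α] {s : Finset α} {a : α}
    (P : α → Prop) [DecidablePred P] (ha : a ∉ s) :
    #((insert a s).filter P) = #(s.filter P) + if P a then 1 else 0 := by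
  rw [card_filter, sum_insert ha, card_filter, add_comm]

theorem filter_LTAdj_p1 : univ.filter (LTAdj p1) = insert u {m1, m2, m3} := by decide

theorem filter_LTAdj_p2 : univ.filter (LTAdj p2) = insert v {m1, m2, m3} := by decide

/-- The neighbourhoods of `p1` and `p2` differ only in their pendant vertex. -/
theorem pendant_eq_iff_of_card_eq (f : LTV → Tgt) (c : Tgt)
    (hcard : #(univ.filter fun x => LTAdj p1 x ∧ f x = c) =
      #(univ.filter fun x => LTAdj p2 x ∧ f x = c)) :
    f u = c ↔ f v = c := by
  rw [← filter_filter, ← filter_filter, filter_LTAdj_p1, filter_LTAdj_p2,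
    card_filter_insert_of_notMem (a := u) _ (by decide),
    card_filter_insert_of_notMem (a := v) _ (by decide),
    add_left_cancel_iff] at hcard
  split_ifs at hcard <;> tauto

theorem stmt_11_general (f : LTV → Tgt)
    (hrg : ∀ x : LTV, x ≠ p1 → x ≠ p2 → f x = Tgt.r ∨ f x = Tgt.g)
    (h1r : (Finset.univ.filter (fun x => LTAdj p1 x ∧ f x = Tgt.r)).card = 2)
    (h2r : (Finset.univ.filter (fun x => LTAdj p2 x ∧ f x = Tgt.r)).card = 2) :
    f u = f v := by
  have hiff := pendant_eq_iff_of_card_eq f r (h1r.trans h2r.symm)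
  rcases hrg u (by decide) (by decide) with hu | hu <;>
    rcases hrg v (by decide) (by decide) with hv | hv <;> simp_all

/-- The limping tripod gadget property: if `f` maps `p1, p2` to `p`, maps the
other vertices to `{r, g}`, and each of `p1, p2` has exactly two neighbours
mapped to `r` and two mapped to `g`, then `f u = f v`. -/
theorem stmt_11 (f : LTV → Tgt)
    (hp1 : f p1 = Tgt.p) (hp2 : f p2 = Tgt.p)
    (hrg : ∀ x : LTV, x ≠ p1 → x ≠ p2 → f x = Tgt.r ∨ f x = Tgt.g)
    (h1r : (Finset.univ.filter (fun x => LTAdj p1 x ∧ f x = Tgt.r)).card = 2)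
    (h1g : (Finset.univ.filter (fun x => LTAdj p1 x ∧ f x = Tgt.g)).card = 2)
    (h2r : (Finset.univ.filter (fun x => LTAdj p2 x ∧ f x = Tgt.r)).card = 2)
    (h2g : (Finset.univ.filter (fun x => LTAdj p2 x ∧ f x = Tgt.g)).card = 2) :
    f u = f v :=
  stmt_11_general f hrg h1r h2r
end
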